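/- Every basic bounded O-submodule B = Σ_i p^{k_i} t^i of K((t)) is complete: every Cauchy net in B (with respect to the higher topology, equivalently the family of admissible seminorms) converges to an element of B. -/
import Mathlib


open Filter Topology

variable {K : Type*}

noncomputable def wB (q : ℝ) : WithBot ℤ → ℝ :=
  WithBot.recBotCoe 0 fun k : ℤ => q ^ k

noncomputable def wT (q : ℝ) : WithTop ℤ → ℝ :=
  WithTop.recTopCoe 0 fun k : ℤ => q ^ (-k)

/-- `a ∈ 𝔭^m` for `m ∈ ℤ ∪ {-∞}`, with `𝔭^{-∞} = K`. -/
def memB [NormedField K] (q : ℝ) (a : K) : WithBot ℤ → Prop :=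
  WithBot.recBotCoe True fun k : ℤ => ‖a‖ ≤ q ^ (-k)

/-- `a ∈ 𝔭^m` for `m ∈ ℤ ∪ {∞}`, with `𝔭^{∞} = 0`. -/
def memT [NormedField K] (q : ℝ) (a : K) : WithTop ℤ → Prop :=
  WithTop.recTopCoe (a = 0) fun k : ℤ => ‖a‖ ≤ q ^ (-k)

/-- The set `Λ = Σ_i 𝔭^{n_i} t^i` in `K((t))`. -/
def latticeSet [NormedField K] (q : ℝ) (n : ℤ → WithBot ℤ) : Set (LaurentSeries K) :=
  {x | ∀ i : ℤ, memB q (x.coeff i) (n i)}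

/-- The set `B = Σ_i 𝔭^{k_i} t^i` in `K((t))`. -/
def bddSet [NormedField K] (q : ℝ) (k : ℤ → WithTop ℤ) : Set (LaurentSeries K) :=
  {x | ∀ i : ℤ, memT q (x.coeff i) (k i)}

/-- The admissible seminorm `‖Σ x_i t^i‖ = sup_i |x_i| q^{n_i}` (with `q^{-∞} = 0`). -/
noncomputable def sn [NormedField K] (q : ℝ) (n : ℤ → WithBot ℤ) (x : LaurentSeries K) : ℝ :=
  ⨆ i : ℤ, ‖x.coeff i‖ * wB q (n i)

/-- Admissibility of the net `(n_i)`: `n_i = -∞` for all sufficiently large `i`. -/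
def AdmNet (n : ℤ → WithBot ℤ) : Prop := ∃ i₀ : ℤ, ∀ i ≥ i₀, n i = ⊥

lemma wB_nonneg {q : ℝ} (hq : 0 < q) (m : WithBot ℤ) : 0 ≤ wB q m := by
  induction m using WithBot.recBotCoe with
  | bot => exact le_refl 0
  | coe m => exact le_of_lt (zpow_pos hq m)

/-- The "single index" admissible seminorm computes the norm of the `i`-th coefficient. -/
lemma sn_single [NormedField K] {q : ℝ} (hq : 0 < q) (i : ℤ) (y : LaurentSeries K) :
    sn q (fun j => if j = i then (0 : WithBot ℤ) else ⊥) y = ‖y.coeff i‖ := by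
  have h0 : wB q (0 : WithBot ℤ) = 1 := by
    show q ^ (0 : ℤ) = 1
    exact zpow_zero q
  have hval : ∀ j : ℤ, ‖y.coeff j‖ * wB q (if j = i then (0 : WithBot ℤ) else ⊥)
      = if j = i then ‖y.coeff i‖ else 0 := by
    intro j
    by_cases h : j = i
    · subst h
      simp [h0]
    · simp [h, wB]
  unfold sn
  apply le_antisymm
  · apply ciSup_le
    intro j
    show ‖y.coeff j‖ * wB q (if j = i then (0 : WithBot ℤ) else ⊥) ≤ ‖y.coeff i‖
    rw [hval j]
    by_cases h : j = i <;> simp [h, norm_nonneg]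
  · have hbdd : BddAbove (Set.range fun j : ℤ =>
        ‖y.coeff j‖ * wB q (if j = i then (0 : WithBot ℤ) else ⊥)) := by
      refine ⟨‖y.coeff i‖, ?_⟩
      rintro r ⟨j, rfl⟩
      show ‖y.coeff j‖ * wB q (if j = i then (0 : WithBot ℤ) else ⊥) ≤ ‖y.coeff i‖
      rw [hval j]
      by_cases h : j = i <;> simp [h, norm_nonneg]
    refine le_trans ?_ (le_ciSup hbdd i)
    simp [h0]

/-- every basic bounded `𝒪`-submodule `B = Σ_i 𝔭^{k_i} t^i` of `K((t))`
is complete: every Cauchy net in `B` (w.r.t. the family of admissible seminorms defining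
the higher topology) converges to an element of `B`. -/
theorem basic_bounded_complete [NontriviallyNormedField K] [CompleteSpace K]
    (hna : IsNonarchimedean fun a : K => ‖a‖) (q : ℝ) (hq : 1 < q)
    (k : ℤ → WithTop ℤ) (hk : ∃ j₀ : ℤ, ∀ i < j₀, k i = ⊤)
    (D : Type*) [Nonempty D] [SemilatticeSup D] (f : D → LaurentSeries K)
    (hf : ∀ d : D, f d ∈ bddSet q k)
    (hcauchy : ∀ n : ℤ → WithBot ℤ, AdmNet n → ∀ ε : ℝ, 0 < ε →
      ∃ d₀ : D, ∀ d ≥ d₀, ∀ e ≥ d₀, sn q n (f d - f e) < ε) :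
    ∃ x ∈ bddSet (K := K) q k, ∀ n : ℤ → WithBot ℤ, AdmNet n → ∀ ε : ℝ, 0 < ε →
      ∃ d₀ : D, ∀ d ≥ d₀, sn q n (f d - x) < ε := by
  classical
  obtain ⟨j₀, hj₀⟩ := hk
  have hq0 : (0 : ℝ) < q := lt_trans one_pos hq
  -- coefficientwise Cauchy, hence coefficientwise convergent
  have hco : ∀ i : ℤ, ∃ c : K, Tendsto (fun d => (f d).coeff i) atTop (𝓝 c) := by
    intro i
    have hC : Cauchy ((atTop : Filter D).map fun d => (f d).coeff i) := by
      rw [Metric.cauchy_iff]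
      refine ⟨Filter.map_neBot, ?_⟩
      intro ε hε
      have hAdm : AdmNet (fun j => if j = i then (0 : WithBot ℤ) else ⊥) := by
        refine ⟨i + 1, fun j hj => ?_⟩
        have : j ≠ i := by omega
        simp [this]
      obtain ⟨d₀, hd₀⟩ := hcauchy _ hAdm ε hε
      refine ⟨(fun d => (f d).coeff i) '' {d | d₀ ≤ d}, ?_, ?_⟩
      · rw [Filter.mem_map]
        exact Filter.mem_of_superset (Filter.mem_atTop d₀) fun d hd => ⟨d, hd, rfl⟩
      · rintro x ⟨d, hd, rfl⟩ y ⟨e, he, rfl⟩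
        have := hd₀ d hd e he
        rw [sn_single hq0 i] at this
        simpa [dist_eq_norm, HahnSeries.coeff_sub] using this
    obtain ⟨c, hc⟩ := CompleteSpace.complete hC
    exact ⟨c, hc⟩
  choose g hg using hco
  have hgc : ∀ i : ℤ, ∀ ε : ℝ, 0 < ε → ∃ d₀ : D, ∀ d ≥ d₀,
      ‖(f d).coeff i - g i‖ < ε := by
    intro i ε hε
    obtain ⟨d₀, hd₀⟩ := (Metric.tendsto_atTop.mp (hg i)) ε hε
    exact ⟨d₀, fun d hd => by simpa [dist_eq_norm] using hd₀ d hd⟩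
  -- coefficients with k i = ⊤ (in particular all i < j₀) have limit 0
  have hgtop : ∀ i : ℤ, k i = ⊤ → g i = 0 := by
    intro i hi
    have hz : ∀ d : D, (f d).coeff i = 0 := by
      intro d
      have := hf d i
      rw [hi] at this
      exact this
    have : Tendsto (fun d : D => (f d).coeff i) atTop (𝓝 0) := by
      simp only [hz]; exact tendsto_const_nhds
    exact tendsto_nhds_unique (hg i) this
  have hg0 : ∀ i : ℤ, i < j₀ → g i = 0 := fun i hi => hgtop i (hj₀ i hi)
  -- build the limit Laurent series
  have hbb : BddBelow (Function.support g) :=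
    HahnSeries.forallLTEqZero_supp_BddBelow g j₀ hg0
  set x : LaurentSeries K := HahnSeries.ofSuppBddBelow g hbb with hx
  have hxc : ∀ i : ℤ, x.coeff i = g i := fun i => rfl
  refine ⟨x, ?_, ?_⟩
  · -- x ∈ bddSet
    intro i
    rw [hxc]
    cases hki : k i with
    | top =>
        show memT q (g i) ⊤
        exact hgtop i hki
    | coe m =>
        show ‖g i‖ ≤ q ^ (-m)
        have hb : ∀ d : D, ‖(f d).coeff i‖ ≤ q ^ (-m) := by
          intro d
          have := hf d i
          rw [hki] at this
          exact this
        exact le_of_tendsto' ((hg i).norm) hb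
  · -- convergence
    rintro n ⟨i₀, hi₀⟩ ε hε
    have hε2 : 0 < ε / 2 := by linarith
    -- pick indices where both n i ≠ ⊥ can happen and coefficient can be nonzero
    set s : Finset ℤ := Finset.Ico j₀ i₀ with hs
    have hdi : ∀ i : ℤ, ∃ d₀ : D, ∀ d ≥ d₀,
        ‖(f d).coeff i - g i‖ < (ε / 2) / (wB q (n i) + 1) := by
      intro i
      refine hgc i _ (div_pos hε2 ?_)
      have := wB_nonneg hq0 (n i)
      linarith
    choose dd hdd using hdi
    obtain ⟨d₀, hd₀⟩ := (s.image dd).exists_le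
    refine ⟨d₀, fun d hd => ?_⟩
    have hterm : ∀ i : ℤ, ‖(f d - x).coeff i‖ * wB q (n i) ≤ ε / 2 := by
      intro i
      by_cases hge : i₀ ≤ i
      · rw [hi₀ i hge]
        simp [wB]
        linarith
      · by_cases hlt : i < j₀
        · have h1 : (f d).coeff i = 0 := by
            have := hf d i
            rw [hj₀ i hlt] at this
            exact this
          have h2 : x.coeff i = 0 := by rw [hxc]; exact hg0 i hlt
          rw [HahnSeries.coeff_sub, h1, h2]
          simp
          linarith
        · -- j₀ ≤ i < i₀
          have his : i ∈ s := Finset.mem_Ico.mpr ⟨by omega, by omega⟩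
          have hddle : dd i ≤ d₀ := hd₀ (dd i) (Finset.mem_image_of_mem dd his)
          have hnear := hdd i d (le_trans hddle hd)
          rw [HahnSeries.coeff_sub, hxc]
          have hwb := wB_nonneg hq0 (n i)
          calc ‖(f d).coeff i - g i‖ * wB q (n i)
              ≤ ((ε / 2) / (wB q (n i) + 1)) * (wB q (n i) + 1) := by
                apply mul_le_mul (le_of_lt hnear) (by linarith) hwb
                positivity
            _ = ε / 2 := div_mul_cancel₀ _ (by positivity)
    have hsn : sn q n (f d - x) ≤ ε / 2 := ciSup_le hterm
    linarith
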